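/- Let F be a linearly ordered field, A a magnitude of F, a ∈ F, and suppose the coset α = a + A is zeroless (0 ∉ a + A). Then A * α⁻¹ = a⁻¹ • A, where α⁻¹ = {x⁻¹ | x ∈ α} and * is the Minkowski product of sets (the formula A/α = A/a). -/

import Mathlib

open Pointwise

/-- A *magnitude* of a linearly ordered field `F` is an order-convex additive subgroup of `F`,
given as a set: it contains `0`, is closed under addition and negation, and is order-convex. -/
def IsMagnitude {F : Type*} [Field F] [LinearOrder F] [IsStrictOrderedRing F] (A : Set F) : Prop :=
  (0 : F) ∈ A ∧ (∀ x ∈ A, ∀ y ∈ A, x + y ∈ A) ∧ (∀ x ∈ A, -x ∈ A) ∧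
    (∀ x ∈ A, ∀ y ∈ A, ∀ z : F, x ≤ z → z ≤ y → z ∈ A)

/-- Order relation on subsets of `F`: `S ≤ T` iff every element of `S` is below some element of `T`. -/
def SetLE {F : Type*} [Field F] [LinearOrder F] [IsStrictOrderedRing F] (S T : Set F) : Prop :=
  ∀ x ∈ S, ∃ y ∈ T, x ≤ y

/-! The coset `a + A` avoids `0` exactly when `a ∉ A`, and then every element of `A` is smaller
than `a` in absolute value. Hence `|a + y| ≥ |a| / 2` for `y ∈ A`, so `a / (a + y)` is bounded by `2`
and `x / (a + y) = a⁻¹ • (a / (a + y) * x)` with `a / (a + y) * x ∈ A` for all `x, y ∈ A`. -/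

namespace IsMagnitude

variable {F : Type*} [Field F] [LinearOrder F] [IsStrictOrderedRing F] {A : Set F}

theorem abs_mem (hA : IsMagnitude A) {x : F} (hx : x ∈ A) : |x| ∈ A := by
  rcases abs_choice x with h | h <;> rw [h]
  exacts [hx, hA.2.2.1 x hx]

theorem mem_of_abs_le (hA : IsMagnitude A) {x z : F} (hx : x ∈ A) (hz : |z| ≤ |x|) : z ∈ A :=
  hA.2.2.2 _ (hA.2.2.1 _ (hA.abs_mem hx)) _ (hA.abs_mem hx) z (neg_le_of_abs_le hz)
    (le_of_abs_le hz)

theorem ne_zero_of_notMem (hA : IsMagnitude A) {a : F} (ha : a ∉ A) : a ≠ 0 :=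
  fun h => ha (h ▸ hA.1)

theorem abs_lt_abs_of_notMem (hA : IsMagnitude A) {a x : F} (ha : a ∉ A) (hx : x ∈ A) :
    |x| < |a| :=
  lt_of_not_ge fun h => ha (hA.mem_of_abs_le hx h)

theorem nsmul_mem (hA : IsMagnitude A) {x : F} (hx : x ∈ A) : ∀ n : ℕ, n • x ∈ A
  | 0 => by simpa using hA.1
  | n + 1 => by rw [succ_nsmul]; exact hA.2.1 _ (hA.nsmul_mem hx n) _ hx

theorem mul_mem_of_abs_le_natCast (hA : IsMagnitude A) {c x : F} {n : ℕ} (hx : x ∈ A)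
    (hc : |c| ≤ n) : c * x ∈ A := by
  refine hA.mem_of_abs_le (hA.nsmul_mem hx n) ?_
  rw [abs_mul, nsmul_eq_mul, abs_mul, Nat.abs_cast]
  exact mul_le_mul_of_nonneg_right hc (abs_nonneg x)

theorem notMem_of_zero_notMem_coset (hA : IsMagnitude A) {a : F} (hzl : (0 : F) ∉ ({a} + A)) :
    a ∉ A := fun ha => hzl ⟨a, rfl, -a, hA.2.2.1 a ha, add_neg_cancel a⟩

theorem abs_le_two_mul_abs_add (hA : IsMagnitude A) {a y : F} (ha : a ∉ A) (hy : y ∈ A) :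
    |a| ≤ 2 * |a + y| := by
  have h2y : 2 * |y| < |a| := by
    simpa [← two_mul, abs_mul] using hA.abs_lt_abs_of_notMem ha (hA.2.1 y hy y hy)
  have : |a| ≤ |a + y| + |y| := by simpa using abs_add_le (a + y) (-y)
  linarith

theorem div_add_mul_mem (hA : IsMagnitude A) {a x y : F} (ha : a ∉ A) (hx : x ∈ A)
    (hy : y ∈ A) : a / (a + y) * x ∈ A := by
  have ha0 : 0 < |a| := abs_pos.2 (hA.ne_zero_of_notMem ha)
  have hay : 0 < |a + y| := by linarith [hA.abs_le_two_mul_abs_add ha hy]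
  refine hA.mul_mem_of_abs_le_natCast (n := 2) hx ?_
  rw [abs_div, div_le_iff₀ hay, Nat.cast_ofNat]
  exact hA.abs_le_two_mul_abs_add ha hy

end IsMagnitude

theorem magnitude_div_coset {F : Type*} [Field F] [LinearOrder F] [IsStrictOrderedRing F]
    (A : Set F) (hA : IsMagnitude A) (a : F) (hzl : (0 : F) ∉ ({a} + A)) :
    A * ((fun x => x⁻¹) '' ({a} + A)) = a⁻¹ • A := by
  have ha : a ∉ A := hA.notMem_of_zero_notMem_coset hzl
  have ha0 : a ≠ 0 := hA.ne_zero_of_notMem ha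
  ext t
  simp only [Set.mem_mul, Set.mem_image, Set.singleton_add, Set.mem_smul_set, smul_eq_mul]
  constructor
  · rintro ⟨x, hx, _, ⟨_, ⟨y, hy, rfl⟩, rfl⟩, rfl⟩
    have hay : a + y ≠ 0 := fun h => hzl ⟨a, rfl, y, hy, h⟩
    exact ⟨a / (a + y) * x, hA.div_add_mul_mem ha hx hy, by field_simp⟩
  · rintro ⟨x, hx, rfl⟩
    exact ⟨x, hx, a⁻¹, ⟨a, ⟨0, hA.1, add_zero a⟩, rfl⟩, mul_comm x a⁻¹⟩
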